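/- arXiv:2212.07551 — 2 statements merged into one kernel-verified Lean document; each statement's English description precedes it below -/
import Mathlib

section
/- (Theorem 2, optimal weights for non-uniform sampling.) Let q ∈ ℝ^d be a query vector and v_1, …, v_n ∈ ℝ^d atom vectors with ∑_{j=1}^d √(q_j² ∑_{i=1}^n v_{ij}²) > 0. For a probability vector w ∈ ℝ^d (w_j > 0, ∑_j w_j = 1), let J be categorical with P(J = j) = w_j and X_{iJ} := v_{iJ} q_J / (d w_J). Then the weights w*_j := √(q_j² ∑_{i=1}^n v_{ij}²) / ∑_{k=1}^d √(q_k² ∑_{i=1}^n v_{ik}²), for j = 1, …, d, minimize the combined variance ∑_{i=1}^n Var_{J∼P_w}[X_{iJ}] over all probability vectors w with positive entries, subject to ∑_{j=1}^d w_j = 1. -/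
open Finset

/-- The importance-weighted estimator `X_{iJ} = v_{iJ} q_J / (d w_J)` of the normalized inner
product, evaluated at coordinate `j`. -/
noncomputable def impEst (d n : ℕ) (v : Fin n → Fin d → ℝ) (q : Fin d → ℝ)
    (w : Fin d → ℝ) (i : Fin n) (j : Fin d) : ℝ :=
  v i j * q j / (d * w j)

/-- The mean `E_{J ∼ P_w}[X_{iJ}]` of the importance-weighted estimator for atom `i`, where
`J` is categorical with `P(J = j) = w_j`. -/
noncomputable def impMean (d n : ℕ) (v : Fin n → Fin d → ℝ) (q : Fin d → ℝ)
    (w : Fin d → ℝ) (i : Fin n) : ℝ :=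
  ∑ j, w j * impEst d n v q w i j

/-- The variance `Var_{J ∼ P_w}[X_{iJ}] = E[(X_{iJ} - E[X_{iJ}])²]` of the importance-weighted
estimator for atom `i`, where `J` is categorical with `P(J = j) = w_j`. -/
noncomputable def impVar (d n : ℕ) (v : Fin n → Fin d → ℝ) (q : Fin d → ℝ)
    (w : Fin d → ℝ) (i : Fin n) : ℝ :=
  ∑ j, w j * (impEst d n v q w i j - impMean d n v q w i) ^ 2

/-- The combined variance `∑_{i ∈ [n]} Var_{J ∼ P_w}[X_{iJ}]` across all atoms. -/
noncomputable def combinedVar (d n : ℕ) (v : Fin n → Fin d → ℝ) (q : Fin d → ℝ)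
    (w : Fin d → ℝ) : ℝ :=
  ∑ i, impVar d n v q w i

/-- The optimal sampling weights of Theorem 2:
`w*_j = √(q_j² ∑_i v_{ij}²) / ∑_k √(q_k² ∑_i v_{ik}²)`. -/
noncomputable def optWeights (d n : ℕ) (v : Fin n → Fin d → ℝ) (q : Fin d → ℝ)
    (j : Fin d) : ℝ :=
  Real.sqrt (q j ^ 2 * ∑ i, v i j ^ 2) / ∑ k, Real.sqrt (q k ^ 2 * ∑ i, v i k ^ 2)

/-!
Writing `a_j := q_j² ∑_i v_{ij}²`, the variance of each estimator is its second moment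
`∑_j v_{ij}² q_j² / (d² w_j)` minus the square of its mean `∑_j v_{ij} q_j / d`, and the mean does
not depend on `w`. So minimizing the combined variance means minimizing `∑_j a_j / w_j` over the
simplex. By Cauchy–Schwarz `(∑_j √a_j)² ≤ (∑_j a_j / w_j) (∑_j w_j)`, and `w*` attains this bound.
Where `w*_j = 0` the estimator takes the junk value `x / 0 = 0`; this is harmless, since then
`a_j = 0` and hence `v_{ij} q_j = 0` for every `i`.
-/

theorem Finset.sum_mul_sq_sub_sum_mul {ι R : Type*} [CommRing R] (s : Finset ι) (w x : ι → R)
    (hw : ∑ j ∈ s, w j = 1) :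
    ∑ j ∈ s, w j * (x j - ∑ k ∈ s, w k * x k) ^ 2 =
      ∑ j ∈ s, w j * x j ^ 2 - (∑ j ∈ s, w j * x j) ^ 2 := by
  set m := ∑ k ∈ s, w k * x k
  calc ∑ j ∈ s, w j * (x j - m) ^ 2
      = ∑ j ∈ s, w j * x j ^ 2 - 2 * m * ∑ j ∈ s, w j * x j + m ^ 2 * ∑ j ∈ s, w j := by
        simp only [mul_sum, ← sum_sub_distrib, ← sum_add_distrib]
        exact sum_congr rfl fun j _ => by ring
    _ = ∑ j ∈ s, w j * x j ^ 2 - m ^ 2 := by rw [hw]; ring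

theorem Finset.sq_sum_sqrt_le_sum_div {ι : Type*} (s : Finset ι) {a w : ι → ℝ}
    (ha : ∀ j ∈ s, 0 ≤ a j) (hw : ∀ j ∈ s, 0 < w j) (hw1 : ∑ j ∈ s, w j = 1) :
    (∑ j ∈ s, √(a j)) ^ 2 ≤ ∑ j ∈ s, a j / w j := by
  calc (∑ j ∈ s, √(a j)) ^ 2 = (∑ j ∈ s, √(a j)) ^ 2 / ∑ j ∈ s, w j := by rw [hw1, div_one]
    _ ≤ ∑ j ∈ s, √(a j) ^ 2 / w j := sq_sum_div_le_sum_sq_div s _ hw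
    _ = ∑ j ∈ s, a j / w j := sum_congr rfl fun j hj => by rw [Real.sq_sqrt (ha j hj)]

theorem Finset.sum_div_sqrt_div_sum_sqrt {ι : Type*} (s : Finset ι) (a : ι → ℝ) :
    ∑ j ∈ s, a j / (√(a j) / ∑ k ∈ s, √(a k)) = (∑ j ∈ s, √(a j)) ^ 2 := by
  simp only [div_div_eq_mul_div, mul_div_right_comm, Real.div_sqrt, ← sum_mul, sq]

theorem mul_eq_zero_of_sq_mul_sum_sq_eq_zero {ι : Type*} (s : Finset ι) {c : ℝ} {x : ι → ℝ}
    (h : c ^ 2 * ∑ i ∈ s, x i ^ 2 = 0) {i : ι} (hi : i ∈ s) : x i * c = 0 := by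
  rcases mul_eq_zero.mp h with hc | hx
  · simp [pow_eq_zero_iff two_ne_zero |>.mp hc]
  · simp [pow_eq_zero_iff two_ne_zero |>.mp
      ((sum_eq_zero_iff_of_nonneg fun i _ => sq_nonneg (x i)).mp hx i hi)]

section Estimator

variable {d n : ℕ} (v : Fin n → Fin d → ℝ) (q : Fin d → ℝ) (w : Fin d → ℝ)

theorem mul_impEst (i : Fin n) (j : Fin d) (hz : w j = 0 → v i j * q j = 0) :
    w j * impEst d n v q w i j = v i j * q j / d := by
  rcases eq_or_ne (w j) 0 with h | h
  · simp [impEst, h, hz h]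
  · rw [impEst]; field_simp

theorem mul_impEst_sq (i : Fin n) (j : Fin d) :
    w j * impEst d n v q w i j ^ 2 = (v i j * q j) ^ 2 / (d ^ 2 * w j) := by
  rcases eq_or_ne (w j) 0 with h | h
  · simp [h]
  · rw [impEst]; field_simp

variable {w}

theorem impMean_eq (hz : ∀ j, w j = 0 → ∀ i, v i j * q j = 0) (i : Fin n) :
    impMean d n v q w i = (∑ j, v i j * q j) / d := by
  rw [impMean, sum_div]
  exact sum_congr rfl fun j _ => mul_impEst v q w i j (hz j · i)

theorem impVar_eq (hw1 : ∑ j, w j = 1) (hz : ∀ j, w j = 0 → ∀ i, v i j * q j = 0) (i : Fin n) :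
    impVar d n v q w i =
      ∑ j, (v i j * q j) ^ 2 / (d ^ 2 * w j) - ((∑ j, v i j * q j) / d) ^ 2 := by
  rw [impVar, impMean, sum_mul_sq_sub_sum_mul _ _ _ hw1, ← impMean, impMean_eq v q hz]
  simp only [mul_impEst_sq]

theorem combinedVar_eq (hw1 : ∑ j, w j = 1) (hz : ∀ j, w j = 0 → ∀ i, v i j * q j = 0) :
    combinedVar d n v q w =
      (∑ j, q j ^ 2 * (∑ i, v i j ^ 2) / w j) / d ^ 2 - ∑ i, ((∑ j, v i j * q j) / d) ^ 2 := by
  simp only [combinedVar, impVar_eq v q hw1 hz, sum_sub_distrib]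
  rw [sum_comm, sum_div]
  congr 1
  refine sum_congr rfl fun j _ => ?_
  rw [mul_sum, sum_div, sum_div]
  exact sum_congr rfl fun i _ => by rw [div_div, mul_comm (w j)]; ring

end Estimator

theorem optimal_weights_general (d n : ℕ) (q : Fin d → ℝ) (v : Fin n → Fin d → ℝ)
    (hpos : 0 < ∑ j, Real.sqrt (q j ^ 2 * ∑ i, v i j ^ 2)) :
    (∀ j, 0 ≤ optWeights d n v q j) ∧ (∑ j, optWeights d n v q j = 1) ∧
      ∀ w : Fin d → ℝ, (∀ j, 0 < w j) → ∑ j, w j = 1 →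
        combinedVar d n v q (optWeights d n v q) ≤ combinedVar d n v q w := by
  set a : Fin d → ℝ := fun j => q j ^ 2 * ∑ i, v i j ^ 2
  have ha : ∀ j ∈ univ, 0 ≤ a j := fun j _ => by positivity
  have hsum : ∑ j, optWeights d n v q j = 1 := by
    simp only [optWeights, ← sum_div, div_self hpos.ne']
  have hsupp : ∀ j, optWeights d n v q j = 0 → ∀ i, v i j * q j = 0 := fun j hj i => by
    rw [optWeights, div_eq_zero_iff, or_iff_left hpos.ne', Real.sqrt_eq_zero (ha j (mem_univ j))]
      at hj
    exact mul_eq_zero_of_sq_mul_sum_sq_eq_zero univ hj (mem_univ i)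
  refine ⟨fun j => by unfold optWeights; positivity, hsum, fun w hw hw1 => ?_⟩
  rw [combinedVar_eq v q hsum hsupp, combinedVar_eq v q hw1 fun j hj => absurd hj (hw j).ne']
  gcongr ?_ / _ - _
  calc ∑ j, a j / optWeights d n v q j = (∑ j, √(a j)) ^ 2 := sum_div_sqrt_div_sum_sqrt univ a
    _ ≤ ∑ j, a j / w j := sq_sum_sqrt_le_sum_div univ ha (fun j _ => hw j) hw1

/-- **Theorem 2 (optimal weights for non-uniform sampling).**
Let `q ∈ ℝ^d` be a query and `v_1, …, v_n ∈ ℝ^d` atoms with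
`∑_j √(q_j² ∑_i v_{ij}²) > 0`. The weights
`w*_j = √(q_j² ∑_i v_{ij}²) / ∑_k √(q_k² ∑_i v_{ik}²)` form a probability vector and
minimize the combined variance `∑_i Var_{J ∼ P_w}[X_{iJ}]` of the importance-weighted
estimators `X_{iJ} = v_{iJ} q_J / (d w_J)` over all probability vectors `w` with positive
entries summing to one. -/
theorem optimal_weights (d n : ℕ) (hd : 0 < d) (q : Fin d → ℝ) (v : Fin n → Fin d → ℝ)
    (hpos : 0 < ∑ j, Real.sqrt (q j ^ 2 * ∑ i, v i j ^ 2)) :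
    (∀ j, 0 ≤ optWeights d n v q j) ∧ (∑ j, optWeights d n v q j = 1) ∧
      ∀ w : Fin d → ℝ, (∀ j, 0 < w j) → ∑ j, w j = 1 →
        combinedVar d n v q (optWeights d n v q) ≤ combinedVar d n v q w :=
  optimal_weights_general d n q v hpos
end

section
/- (Theorem 1, correctness of BanditMIPS.) Let q ∈ ℝ^d and v_1, …, v_n ∈ ℝ^d, let μ_i := (1/d) ∑_{j=1}^d v_{ij} q_j, and assume the maximizer i* = argmax_i μ_i is unique. Let J_1, J_2, … be i.i.d. uniform on {1,…,d}, assume each sample v_{i J_t} q_{J_t} is σ-sub-Gaussian about its mean μ_i, and let δ ∈ (0,1). Consider the successive-elimination procedure that maintains a surviving set S (initialized to {1,…,n}), at each step m samples the coordinate J_m, updates μ̂_i(m) = (1/m) ∑_{t=1}^m v_{i J_t} q_{J_t} for all i ∈ S, sets C_m = σ√(2 log(4 n m²/δ)/m), replaces S by {i ∈ S : μ̂_i(m) + C_m ≥ max_{i'∈S} μ̂_{i'}(m) − C_m}, stops when |S| = 1 or m = d, and if more than one atom remains computes their inner products exactly and returns the argmax. Then with probability at least 1 − δ this procedure returns i*.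 -/
open Finset MeasureTheory ProbabilityTheory ENNReal

/-- The normalized inner product `μ_i = (1/d) ∑_j v_{ij} q_j` of atom `i` with the query. -/
noncomputable def normIP (d n : ℕ) (v : Fin n → Fin d → ℝ) (q : Fin d → ℝ) (i : Fin n) : ℝ :=
  (1 / d : ℝ) * ∑ j, v i j * q j

/-- The running estimate `μ̂_i(m) = (1/m) ∑_{t=1}^m v_{i J_t} q_{J_t}` after `m` sampled
coordinates (the samples being indexed by `t ∈ {0, …, m-1}`). -/
noncomputable def runningEst {Ω : Type*} (d n : ℕ) (v : Fin n → Fin d → ℝ) (q : Fin d → ℝ)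
    (J : ℕ → Ω → Fin d) (i : Fin n) (m : ℕ) (ω : Ω) : ℝ :=
  (1 / m : ℝ) * ∑ t ∈ Finset.range m, v i (J t ω) * q (J t ω)

/-- The anytime confidence width `C_m = σ √(2 log(4 n m² / δ) / m)` used by BanditMIPS. -/
noncomputable def confWidth (n : ℕ) (σ δ : ℝ) (m : ℕ) : ℝ :=
  σ * Real.sqrt (2 * Real.log (4 * n * m ^ 2 / δ) / m)

/-- The surviving set of the successive-elimination procedure: `S_0 = {1, …, n}`, and at
step `m + 1` (provided more than one atom survives) the set is replaced by
`{i ∈ S : μ̂_i(m+1) + C_{m+1} ≥ max_{i' ∈ S} μ̂_{i'}(m+1) − C_{m+1}}`; once `|S| ≤ 1` the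
procedure has stopped and the set is frozen. -/
noncomputable def surviveSet (n : ℕ) (μhat : Fin n → ℕ → ℝ) (C : ℕ → ℝ) : ℕ → Finset (Fin n)
  | 0 => Finset.univ
  | m + 1 =>
    let S := surviveSet n μhat C m
    if h : 1 < S.card then
      S.filter fun i =>
        (S.sup' (Finset.card_pos.mp (lt_trans Nat.zero_lt_one h))
            fun i' => μhat i' (m + 1)) - C (m + 1) ≤ μhat i (m + 1) + C (m + 1)
    else S

/-- The output of BanditMIPS: run the successive elimination for at most `d` steps
(stopping early once a single atom survives, since the surviving set is then frozen); if
more than one atom remains, compute the (normalized) inner products `μ` exactly and return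
the argmax over the surviving set.  (When exactly one atom remains it is likewise the
argmax over the singleton surviving set.) -/
noncomputable def banditOutput (n d : ℕ) (μ : Fin n → ℝ) (μhat : Fin n → ℕ → ℝ)
    (C : ℕ → ℝ) (dflt : Fin n) : Fin n :=
  if h : (surviveSet n μhat C d).Nonempty then
    Classical.choose ((surviveSet n μhat C d).exists_max_image μ h)
  else dflt

/-!
On the event that every running estimate `μ̂_i(m)`, `1 ≤ m ≤ d`, lies within `C_m` of `μ_i`,
the best atom is never eliminated: its upper confidence bound `μ̂_{i*}(m) + C_m ≥ μ_{i*} ≥ μ_{i'}`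
dominates every lower bound `μ̂_{i'}(m) - C_m`. It therefore survives all `d` rounds and is the
argmax of the exact inner products over the final surviving set. The width `C_m` is chosen so
that, by Hoeffding's inequality for the independent `σ`-sub-Gaussian centred samples,
`|μ̂_i(m) - μ_i| > C_m` has probability at most `δ / (2 n m²)`; a union bound over `i` and `m`,
with `∑ 1/m² ≤ 2`, bounds the failure probability by `δ`.
-/

open Real
open scoped NNReal

section Subgaussian

variable {Ω : Type*} [MeasurableSpace Ω] {μ : Measure Ω}

lemma hasSubgaussianMGF_comp_of_finite [IsFiniteMeasure μ] {α : Type*} [MeasurableSpace α]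
    [Finite α] [MeasurableSingletonClass α] {Z : Ω → α} (hZ : Measurable Z) (g : α → ℝ)
    {c : ℝ≥0} (hmgf : ∀ t, mgf (fun ω ↦ g (Z ω)) μ t ≤ exp (c * t ^ 2 / 2)) :
    HasSubgaussianMGF (fun ω ↦ g (Z ω)) c μ where
  integrable_exp_mul t :=
    (Integrable.of_finite (μ := μ.map Z) (f := fun a ↦ exp (t * g a))).comp_measurable hZ
  mgf_le := hmgf

namespace ProbabilityTheory.HasSubgaussianMGF

variable [IsFiniteMeasure μ] {X : Ω → ℝ} {c : ℝ≥0} {ε p : ℝ}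

lemma measureReal_gt_le (h : HasSubgaussianMGF X c μ) (hε : 0 ≤ ε) (hp : 0 < p)
    (hεp : 2 * c * log p⁻¹ ≤ ε ^ 2) : μ.real {ω | ε < X ω} ≤ p := by
  -- For `c = 0` the Chernoff bound reads `exp (-ε ^ 2 / 0) = 1`; instead, `X = 0` a.e.
  rcases eq_zero_or_pos c with rfl | hc
  · have hnull : μ {ω | ε < X ω} = 0 :=
      measure_mono_null (Set.ofPred_subset_ofPred.mpr fun _ ↦ not_le.mpr) <| ae_iff.mp <|
        h.ae_eq_zero_of_hasSubgaussianMGF_zero.mono fun ω (hω : X ω = 0) ↦ hω ▸ hε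
    simpa [Measure.real, hnull] using hp.le
  calc μ.real {ω | ε < X ω} ≤ μ.real {ω | ε ≤ X ω} :=
        measureReal_mono (Set.ofPred_subset_ofPred.mpr fun _ ↦ le_of_lt)
    _ ≤ exp (-ε ^ 2 / (2 * c)) := h.measure_ge_le hε
    _ ≤ exp (log p) := by
      gcongr
      rw [Real.log_inv] at hεp
      rw [div_le_iff₀ (by positivity)]
      linarith
    _ = p := exp_log hp

lemma measureReal_abs_gt_le (h : HasSubgaussianMGF X c μ) (hε : 0 ≤ ε) (hp : 0 < p)
    (hεp : 2 * c * log p⁻¹ ≤ ε ^ 2) : μ.real {ω | ε < |X ω|} ≤ 2 * p := by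
  have hsplit : {ω | ε < |X ω|} = {ω | ε < X ω} ∪ {ω | ε < (-X) ω} := by
    ext ω
    simp [lt_abs]
  calc μ.real {ω | ε < |X ω|} ≤ μ.real {ω | ε < X ω} + μ.real {ω | ε < (-X) ω} :=
        hsplit ▸ measureReal_union_le _ _
    _ ≤ p + p := add_le_add (h.measureReal_gt_le hε hp hεp) (h.neg.measureReal_gt_le hε hp hεp)
    _ = 2 * p := by ring

end ProbabilityTheory.HasSubgaussianMGF

lemma measureReal_abs_sum_range_gt_le [IsFiniteMeasure μ] {Y : ℕ → Ω → ℝ}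
    (hindep : iIndepFun Y μ) {c : ℝ≥0} (hY : ∀ t, HasSubgaussianMGF (Y t) c μ) (m : ℕ)
    {ε p : ℝ} (hε : 0 ≤ ε) (hp : 0 < p) (hεp : 2 * m * c * log p⁻¹ ≤ ε ^ 2) :
    μ.real {ω | ε < |∑ t ∈ range m, Y t ω|} ≤ 2 * p := by
  refine (HasSubgaussianMGF.sum_of_iIndepFun hindep (s := range m) fun t _ ↦ hY t)
    |>.measureReal_abs_gt_le hε hp ?_
  simpa [mul_assoc] using hεp

end Subgaussian

lemma sum_Icc_one_inv_sq_le_two (d : ℕ) : ∑ m ∈ Icc 1 d, ((m : ℝ) ^ 2)⁻¹ ≤ 2 := by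
  have hIcc : Icc 1 d = Ioo 0 (d + 1) := by ext; simp; omega
  simpa [hIcc] using sum_Ioo_inv_sq_le (α := ℝ) 0 (d + 1)

lemma one_sub_ofReal_le_of_measureReal_compl_le {Ω : Type*} [MeasurableSpace Ω]
    {P : Measure Ω} [IsProbabilityMeasure P] {s : Set Ω} {δ : ℝ} (h : P.real sᶜ ≤ δ) :
    1 - ENNReal.ofReal δ ≤ P s := by
  rw [tsub_le_iff_right]
  calc (1 : ℝ≥0∞) = P (s ∪ sᶜ) := by rw [Set.union_compl_self, measure_univ]
    _ ≤ P s + P sᶜ := measure_union_le _ _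
    _ ≤ P s + ENNReal.ofReal δ := by
      gcongr
      rw [← ofReal_measureReal]
      exact ENNReal.ofReal_le_ofReal h

section Elimination

variable {n : ℕ} {μ : Fin n → ℝ} {μhat : Fin n → ℕ → ℝ} {C : ℕ → ℝ} {istar : Fin n}

lemma mem_surviveSet_of_abs_sub_le (hmax : ∀ i, μ i ≤ μ istar) {d : ℕ}
    (hgood : ∀ m ∈ Icc 1 d, ∀ i, |μhat i m - μ i| ≤ C m) {m : ℕ} (hm : m ≤ d) :
    istar ∈ surviveSet n μhat C m := by
  induction m with
  | zero => simp [surviveSet]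
  | succ m ih =>
    have hS := ih (by omega)
    rw [surviveSet]
    split_ifs with h
    · refine mem_filter.mpr ⟨hS, ?_⟩
      have hdev := hgood (m + 1) (mem_Icc.mpr ⟨by omega, hm⟩)
      have hsup : (surviveSet n μhat C m).sup' ⟨istar, hS⟩ (fun i' ↦ μhat i' (m + 1)) ≤
          μhat istar (m + 1) + 2 * C (m + 1) :=
        sup'_le _ _ fun i' _ ↦ by
          linarith [(abs_le.mp (hdev i')).2, (abs_le.mp (hdev istar)).1, hmax i']
      linarith
    · exact hS

lemma banditOutput_eq_of_mem_surviveSet (hmax : ∀ i, i ≠ istar → μ i < μ istar) {d : ℕ}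
    (dflt : Fin n) (hmem : istar ∈ surviveSet n μhat C d) :
    banditOutput n d μ μhat C dflt = istar := by
  have hne : (surviveSet n μhat C d).Nonempty := ⟨istar, hmem⟩
  rw [banditOutput, dif_pos hne]
  obtain ⟨-, hle⟩ := Classical.choose_spec ((surviveSet n μhat C d).exists_max_image μ hne)
  by_contra hc
  exact (hle istar hmem).not_gt (hmax _ hc)

end Elimination

section Sampling

variable {Ω : Type*} {d n : ℕ} (v : Fin n → Fin d → ℝ) (q : Fin d → ℝ)
  (J : ℕ → Ω → Fin d)

lemma runningEst_sub_eq_div (i : Fin n) {m : ℕ} (hm : m ≠ 0) (c : ℝ) (ω : Ω) :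
    runningEst d n v q J i m ω - c = (∑ t ∈ range m, (v i (J t ω) * q (J t ω) - c)) / m := by
  rw [runningEst, sum_sub_distrib, sum_const, card_range, nsmul_eq_mul]
  field_simp

lemma confWidth_nonneg (n : ℕ) {σ : ℝ} (hσ : 0 ≤ σ) (δ : ℝ) (m : ℕ) : 0 ≤ confWidth n σ δ m := by
  unfold confWidth
  positivity

lemma sq_natCast_mul_confWidth {n m : ℕ} (hn : 0 < n) (hm : 0 < m) (σ : ℝ) {δ : ℝ}
    (hδ0 : 0 < δ) (hδ1 : δ ≤ 1) :
    ((m : ℝ) * confWidth n σ δ m) ^ 2 = 2 * m * σ ^ 2 * Real.log (4 * n * m ^ 2 / δ) := by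
  have hn' : (1 : ℝ) ≤ n := by exact_mod_cast hn
  have hm' : (1 : ℝ) ≤ m := by exact_mod_cast hm
  have hlog : 0 ≤ Real.log (4 * n * m ^ 2 / δ) := log_nonneg <| by
    rw [le_div_iff₀ hδ0]
    nlinarith
  rw [confWidth, mul_pow, mul_pow, sq_sqrt (by positivity)]
  field_simp

variable [MeasurableSpace Ω] {P : Measure Ω} [IsProbabilityMeasure P] {v q J}

lemma measureReal_confWidth_lt_abs_runningEst_sub_le (hJmeas : ∀ t, Measurable (J t))
    (hindep : iIndepFun J P) {σ : ℝ} (hσ : 0 ≤ σ) (i : Fin n)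
    (hsubG : ∀ (t : ℕ) (l : ℝ),
      ∫ ω, exp (l * (v i (J t ω) * q (J t ω) - normIP d n v q i)) ∂P ≤ exp (l ^ 2 * σ ^ 2 / 2))
    {δ : ℝ} (hδ0 : 0 < δ) (hδ1 : δ ≤ 1) {m : ℕ} (hm : 0 < m) :
    P.real {ω | confWidth n σ δ m < |runningEst d n v q J i m ω - normIP d n v q i|} ≤
      δ / (2 * n * m ^ 2) := by
  set Y : ℕ → Ω → ℝ := fun t ω ↦ v i (J t ω) * q (J t ω) - normIP d n v q i
  have hY : ∀ t, HasSubgaussianMGF (Y t) (σ ^ 2).toNNReal P := fun t ↦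
    hasSubgaussianMGF_comp_of_finite (hJmeas t) (fun j ↦ v i j * q j - normIP d n v q i)
      fun l ↦ by rw [mgf, Real.coe_toNNReal _ (sq_nonneg σ), mul_comm (σ ^ 2)]; exact hsubG t l
  have hYindep : iIndepFun Y P := hindep.comp (fun _ j ↦ v i j * q j - normIP d n v q i) fun _ ↦
    measurable_of_countable _
  have hset : {ω | confWidth n σ δ m < |runningEst d n v q J i m ω - normIP d n v q i|} =
      {ω | m * confWidth n σ δ m < |∑ t ∈ range m, Y t ω|} := by
    ext ω
    simp only [Set.mem_ofPred_eq, runningEst_sub_eq_div v q J i hm.ne', abs_div, Nat.abs_cast,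
      lt_div_iff₀' (Nat.cast_pos.mpr hm : (0 : ℝ) < m), Y]
  have hn : 0 < n := i.pos
  calc P.real {ω | confWidth n σ δ m < |runningEst d n v q J i m ω - normIP d n v q i|}
      ≤ 2 * (δ / (4 * n * m ^ 2)) := by
        rw [hset]
        refine measureReal_abs_sum_range_gt_le hYindep hY m
          (mul_nonneg m.cast_nonneg (confWidth_nonneg n hσ δ m)) (by positivity) ?_
        rw [inv_div, sq_natCast_mul_confWidth hn hm σ hδ0 hδ1,
          Real.coe_toNNReal _ (sq_nonneg σ)]
    _ = δ / (2 * n * m ^ 2) := by ring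

lemma measureReal_exists_confWidth_lt_abs_runningEst_sub_le (hJmeas : ∀ t, Measurable (J t))
    (hindep : iIndepFun J P) {σ : ℝ} (hσ : 0 ≤ σ)
    (hsubG : ∀ (i : Fin n) (t : ℕ) (l : ℝ),
      ∫ ω, exp (l * (v i (J t ω) * q (J t ω) - normIP d n v q i)) ∂P ≤ exp (l ^ 2 * σ ^ 2 / 2))
    {δ : ℝ} (hδ0 : 0 < δ) (hδ1 : δ ≤ 1) (hn : 0 < n) :
    P.real {ω | ∃ m ∈ Icc 1 d, ∃ i,
      confWidth n σ δ m < |runningEst d n v q J i m ω - normIP d n v q i|} ≤ δ := by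
  have hunion : {ω | ∃ m ∈ Icc 1 d, ∃ i,
      confWidth n σ δ m < |runningEst d n v q J i m ω - normIP d n v q i|} =
      ⋃ m ∈ Icc 1 d, ⋃ i, {ω | confWidth n σ δ m <
        |runningEst d n v q J i m ω - normIP d n v q i|} := by
    ext ω
    simp
  calc _ ≤ ∑ m ∈ Icc 1 d, ∑ i, P.real {ω | confWidth n σ δ m <
        |runningEst d n v q J i m ω - normIP d n v q i|} :=
        hunion ▸ (measureReal_biUnion_finset_le _ _).trans
          (sum_le_sum fun m _ ↦ measureReal_iUnion_fintype_le _)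
    _ ≤ ∑ m ∈ Icc 1 d, ∑ _i : Fin n, δ / (2 * n * m ^ 2) := by
        gcongr with m hm i
        exact measureReal_confWidth_lt_abs_runningEst_sub_le hJmeas hindep hσ i (hsubG i) hδ0 hδ1
          (mem_Icc.mp hm).1
    _ = δ / 2 * ∑ m ∈ Icc 1 d, ((m : ℝ) ^ 2)⁻¹ := by
        rw [mul_sum]
        refine sum_congr rfl fun m _ ↦ ?_
        rw [sum_const, card_univ, Fintype.card_fin, nsmul_eq_mul]
        field_simp
    _ ≤ δ / 2 * 2 := by gcongr; exact sum_Icc_one_inv_sq_le_two d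
    _ = δ := by ring

end Sampling

theorem banditMIPS_correct_general
    {Ω : Type*} [MeasurableSpace Ω] (P : Measure Ω) [IsProbabilityMeasure P]
    (d n : ℕ) (q : Fin d → ℝ) (v : Fin n → Fin d → ℝ)
    (istar : Fin n) (hstar : ∀ i, i ≠ istar → normIP d n v q i < normIP d n v q istar)
    (J : ℕ → Ω → Fin d) (hJmeas : ∀ t, Measurable (J t))
    (hindep : iIndepFun J P)
    (σ : ℝ) (hσ : 0 ≤ σ)
    (hsubG : ∀ (i : Fin n) (t : ℕ) (l : ℝ),
      ∫ ω, Real.exp (l * (v i (J t ω) * q (J t ω) - normIP d n v q i)) ∂P ≤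
        Real.exp (l ^ 2 * σ ^ 2 / 2))
    (δ : ℝ) (hδ0 : 0 < δ) (hδ1 : δ < 1) :
    1 - ENNReal.ofReal δ ≤
      P {ω | banditOutput n d (normIP d n v q)
          (fun i m => runningEst d n v q J i m ω)
          (confWidth n σ δ) ⟨0, istar.pos⟩ = istar} := by
  have hmax : ∀ i, normIP d n v q i ≤ normIP d n v q istar := fun i ↦ by
    rcases eq_or_ne i istar with rfl | hi
    exacts [le_rfl, (hstar i hi).le]
  refine one_sub_ofReal_le_of_measureReal_compl_le <| (measureReal_mono fun ω hω ↦ ?_).trans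
    (measureReal_exists_confWidth_lt_abs_runningEst_sub_le hJmeas hindep hσ hsubG hδ0 hδ1.le
      istar.pos)
  by_contra hdev
  simp only [Set.mem_ofPred_eq, not_exists, not_and, not_lt] at hdev
  exact hω (banditOutput_eq_of_mem_surviveSet hstar _
    (mem_surviveSet_of_abs_sub_le hmax hdev le_rfl))

/-- **Theorem 1 (correctness of BanditMIPS).**
Let `q ∈ ℝ^d`, `v_1, …, v_n ∈ ℝ^d`, `μ_i = (1/d) ∑_j v_{ij} q_j` with unique maximizer
`i*`, and let `J_1, J_2, …` be i.i.d. uniform on `{1, …, d}` with each sample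
`v_{i J_t} q_{J_t}` being `σ`-sub-Gaussian about its mean `μ_i`. Then, for `δ ∈ (0,1)`,
the successive-elimination procedure with anytime confidence widths
`C_m = σ √(2 log(4 n m² / δ) / m)` returns `i*` with probability at least `1 − δ`. -/
theorem banditMIPS_correct
    {Ω : Type*} [MeasurableSpace Ω] (P : Measure Ω) [IsProbabilityMeasure P]
    (d n : ℕ) (hd : 0 < d) (q : Fin d → ℝ) (v : Fin n → Fin d → ℝ)
    (istar : Fin n) (hstar : ∀ i, i ≠ istar → normIP d n v q i < normIP d n v q istar)
    (J : ℕ → Ω → Fin d) (hJmeas : ∀ t, Measurable (J t))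
    (hindep : iIndepFun J P)
    (hunif : ∀ (t : ℕ) (j : Fin d), P {ω | J t ω = j} = (d : ℝ≥0∞)⁻¹)
    (σ : ℝ) (hσ : 0 ≤ σ)
    (hsubG : ∀ (i : Fin n) (t : ℕ) (l : ℝ),
      ∫ ω, Real.exp (l * (v i (J t ω) * q (J t ω) - normIP d n v q i)) ∂P ≤
        Real.exp (l ^ 2 * σ ^ 2 / 2))
    (δ : ℝ) (hδ0 : 0 < δ) (hδ1 : δ < 1) :
    1 - ENNReal.ofReal δ ≤
      P {ω | banditOutput n d (normIP d n v q)
          (fun i m => runningEst d n v q J i m ω)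
          (confWidth n σ δ) ⟨0, istar.pos⟩ = istar} :=
  banditMIPS_correct_general P d n q v istar hstar J hJmeas hindep σ hσ hsubG δ hδ0 hδ1
end
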